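/- Let A and E be real m×n matrices, b ∈ ℝᵐ, and suppose A x = b and (A + E) x̃ = b exactly. Fix an index i and let δ = dist(fᵢ, span{fⱼ : j ≠ i}) > 0, where f₁, …, fₙ are the columns of A. Then |xᵢ − x̃ᵢ| ≤ ‖E‖₂ · ‖x̃‖₂ / δ. -/

import Mathlib

open Matrix Submodule

noncomputable section

/-- The `j`-th column of `A`, as a vector of `ℝᵐ` with the Euclidean norm. -/
def col {m n : ℕ} (A : Matrix (Fin m) (Fin n) ℝ) (j : Fin n) : EuclideanSpace ℝ (Fin m) :=
  WithLp.toLp 2 (fun k => A k j)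

/-- The spectral (operator) norm of a matrix w.r.t. the Euclidean norms. -/
def opNorm {m n : ℕ} (E : Matrix (Fin m) (Fin n) ℝ) : ℝ :=
  ‖(Matrix.toEuclideanLin E).toContinuousLinearMap‖

/-! Subtracting the two systems gives `A (x - x̃) = E x̃`. The left side is `(xᵢ - x̃ᵢ) fᵢ` plus a
vector of the span of the other columns, so its norm is at least `|xᵢ - x̃ᵢ| δ`, while the right
side has norm at most `‖E‖₂ ‖x̃‖₂`. -/

lemma mul_infDist_le_norm_smul_add {𝕜 V : Type*} [NormedField 𝕜] [SeminormedAddCommGroup V]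
    [NormedSpace 𝕜 V] (S : Submodule 𝕜 V) (c : 𝕜) (u : V) {s : V} (hs : s ∈ S) :
    ‖c‖ * Metric.infDist u S ≤ ‖c • u + s‖ := by
  rcases eq_or_ne c 0 with rfl | hc
  · simp
  have hsplit : c • u + s = c • (u - -c⁻¹ • s) := by
    rw [neg_smul, sub_neg_eq_add, smul_add, smul_smul, mul_inv_cancel₀ hc, one_smul]
  rw [hsplit, norm_smul, ← dist_eq_norm]
  gcongr
  exact Metric.infDist_le_dist_of_mem (S.smul_mem _ hs)

lemma norm_mul_infDist_span_le_norm_sum {𝕜 V ι : Type*} [NormedField 𝕜]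
    [SeminormedAddCommGroup V] [NormedSpace 𝕜 V] [Fintype ι] [DecidableEq ι]
    (f : ι → V) (v : ι → 𝕜) (i : ι) :
    ‖v i‖ * Metric.infDist (f i) (span 𝕜 (f '' {i}ᶜ)) ≤ ‖∑ j, v j • f j‖ := by
  rw [← Finset.add_sum_erase _ _ (Finset.mem_univ i)]
  refine mul_infDist_le_norm_smul_add _ _ _ (Submodule.sum_mem _ fun j hj => ?_)
  exact Submodule.smul_mem _ _ (subset_span ⟨j, Finset.ne_of_mem_erase hj, rfl⟩)

lemma toEuclideanLin_eq_sum_smul_col {m n : ℕ} (A : Matrix (Fin m) (Fin n) ℝ)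
    (v : EuclideanSpace ℝ (Fin n)) :
    Matrix.toEuclideanLin A v = ∑ j, v j • _root_.col A j := by
  ext k
  simp [_root_.col, Matrix.toEuclideanLin, Matrix.mulVec, dotProduct, mul_comm]

lemma norm_toEuclideanLin_apply_le {m n : ℕ} (E : Matrix (Fin m) (Fin n) ℝ)
    (v : EuclideanSpace ℝ (Fin n)) :
    ‖Matrix.toEuclideanLin E v‖ ≤ opNorm E * ‖v‖ :=
  (Matrix.toEuclideanLin E).toContinuousLinearMap.le_opNorm v

/-- if `A x = b`, `(A + E) x̃ = b`, and `δ > 0` is the distance from the column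
`fᵢ` of `A` to the span of the remaining columns, then `|xᵢ - x̃ᵢ| ≤ ‖E‖₂ ‖x̃‖₂ / δ`. -/
theorem abs_coord_diff_le_of_perturbation
    {m n : ℕ} (A E : Matrix (Fin m) (Fin n) ℝ) (b : EuclideanSpace ℝ (Fin m))
    (x xt : EuclideanSpace ℝ (Fin n))
    (hx : Matrix.toEuclideanLin A x = b)
    (hxt : Matrix.toEuclideanLin (A + E) xt = b)
    (i : Fin n) (δ : ℝ)
    (hδ : δ = Metric.infDist (_root_.col A i)
      (↑(Submodule.span ℝ
        {w : EuclideanSpace ℝ (Fin m) | ∃ j : Fin n, j ≠ i ∧ w = _root_.col A j}) :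
          Set (EuclideanSpace ℝ (Fin m))))
    (hδpos : 0 < δ) :
    |x i - xt i| ≤ opNorm E * ‖xt‖ / δ := by
  have hresidual : Matrix.toEuclideanLin A (x - xt) = Matrix.toEuclideanLin E xt := by
    rw [map_sub, hx, ← hxt, map_add, LinearMap.add_apply, add_sub_cancel_left]
  have hcols : {w | ∃ j, j ≠ i ∧ w = _root_.col A j} = _root_.col A '' {i}ᶜ := by
    ext w; simp [eq_comm]
  have hlower : |x i - xt i| * δ ≤ ‖Matrix.toEuclideanLin A (x - xt)‖ := by
    rw [hδ, hcols, toEuclideanLin_eq_sum_smul_col]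
    exact norm_mul_infDist_span_le_norm_sum (_root_.col A) (x - xt) i
  rw [le_div_iff₀ hδpos]
  calc |x i - xt i| * δ ≤ ‖Matrix.toEuclideanLin A (x - xt)‖ := hlower
    _ = ‖Matrix.toEuclideanLin E xt‖ := by rw [hresidual]
    _ ≤ opNorm E * ‖xt‖ := norm_toEuclideanLin_apply_le E xt
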